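/- arXiv:1902.00374 — 2 statements merged into one kernel-verified Lean document; each statement's English description precedes it below -/
import Mathlib

section
/- For every positive integer n there exists a rational function r_n = p_n/q_n, where p_n and q_n are real polynomials of degree at most n and q_n has no zeros on the interval [-1,1], such that sup_{x ∈ [-1,1]} | |x| - r_n(x) | ≤ 3·exp(-√n). In particular, rational approximations to |x| on [-1,1] converge root-exponentially, i.e. at the rate O(exp(-C√n)) for some constant C > 0. -/
/-!
Newman's construction. With nodes `ξ ^ k` (`k < N`, `N` even) put `A(x) = ∏ (x + ξ ^ k)` and
`r(x) = x (A(x) - A(-x)) / (A(x) + A(-x))`, an even rational function of degree `N`. For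
`0 ≤ x ≤ 1` one has `x - r(x) = 2 x A(-x) / (A(x) + A(-x))`, so everything hinges on the ratio
`|A(-x) / A(x)| = ∏ |x - ξ ^ k| / (x + ξ ^ k)`. For `x ≤ ξ ^ N`, below all nodes, the ratio
lies in `[0, 1]` and the error is at most `x`. Above it, each factor is at most
`exp (-2 min (x / ξ ^ k, ξ ^ k / x))`, and these minima add up to at least `∑_{j=1}^{N} ξ ^ j`;
for `N = 2 ⌊n / 2⌋` and `ξ = exp (-√n / N)` this sum exceeds `√n / 2`, so the ratio is at most
`exp (-√n) = ξ ^ N`.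
Small `n` are covered by the polynomials `1/2` and `x ^ 2 + 1/8`.
-/

open Real Finset Polynomial

theorem one_sub_le_exp_neg_two_mul_mul_one_add {u : ℝ} (hu : 0 ≤ u) :
    1 - u ≤ exp (-2 * u) * (1 + u) := by
  rcases le_or_gt 1 u with h1 | h1
  · nlinarith [exp_pos (-2 * u)]
  have hlog : 2 * u ≤ log (1 + u) - log (1 - u) := by
    simpa using le_hasSum (hasSum_log_sub_log_of_abs_lt_one (abs_lt.2 ⟨by linarith, h1⟩)) 0
      fun k _ => by positivity
  have hexp : exp (2 * u) * (1 - u) ≤ 1 + u := by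
    calc exp (2 * u) * (1 - u) ≤ exp (log (1 + u) - log (1 - u)) * (1 - u) := by
          gcongr
      _ = 1 + u := by
          rw [exp_sub, exp_log (by linarith), exp_log (by linarith)]
          field_simp [show (1 - u) ≠ 0 by linarith]
  rw [show -2 * u = -(2 * u) by ring, exp_neg, le_inv_mul_iff₀ (exp_pos _)]
  linarith

theorem sub_le_exp_mul_add {s u v : ℝ} (hs : 0 ≤ s) (hv : 0 ≤ v) (hsv : s * v ≤ u) :
    v - u ≤ exp (-2 * s) * (v + u) :=
  calc v - u ≤ v * (1 - s) := by linarith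
    _ ≤ v * (exp (-2 * s) * (1 + s)) := by
        gcongr; exact one_sub_le_exp_neg_two_mul_mul_one_add hs
    _ = exp (-2 * s) * (v + s * v) := by ring
    _ ≤ exp (-2 * s) * (v + u) := by gcongr

theorem abs_sub_le_exp_mul_add {s u v : ℝ} (hs : 0 ≤ s) (hu : 0 ≤ u) (hv : 0 ≤ v)
    (hsv : s * v ≤ u) (hsu : s * u ≤ v) : |u - v| ≤ exp (-2 * s) * (u + v) := by
  rw [abs_sub_le_iff]
  constructor
  · exact sub_le_exp_mul_add hs hu hsu
  · rw [add_comm]; exact sub_le_exp_mul_add hs hv hsv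

theorem prod_abs_sub_mul_pow_le {ξ : ℝ} (hξ0 : 0 ≤ ξ) (hξ1 : ξ ≤ 1) :
    ∀ (N : ℕ) {c x : ℝ}, 0 ≤ c → c * ξ ^ N ≤ x → x ≤ c →
      ∏ k ∈ range N, |x - c * ξ ^ k| ≤
        exp (-2 * ∑ j ∈ range N, ξ ^ (j + 1)) * ∏ k ∈ range N, (x + c * ξ ^ k)
  | 0, _, _, _, _, _ => by simp
  | N + 1, c, x, hc, hlo, hhi => by
    -- Peel off the last node if `x` lies above it, and otherwise the first one; the remaining
    -- nodes are then those of `c` (resp. `c * ξ`) with one node fewer.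
    have hs0 : 0 ≤ ξ ^ (N + 1) := pow_nonneg hξ0 _
    have hs1 : ξ ^ (N + 1) ≤ 1 := pow_le_one₀ hξ0 hξ1
    have hx : 0 ≤ x := (mul_nonneg hc (pow_nonneg hξ0 _)).trans hlo
    rw [sum_range_succ, mul_add, exp_add]
    rcases le_or_gt (c * ξ ^ N) x with hN | hN
    · have last : |x - c * ξ ^ N| ≤ exp (-2 * ξ ^ (N + 1)) * (x + c * ξ ^ N) := by
        refine abs_sub_le_exp_mul_add hs0 hx (by positivity) ?_ ?_
        · exact (mul_le_of_le_one_left (by positivity) hs1).trans hN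
        · calc ξ ^ (N + 1) * x ≤ ξ ^ N * c := by
                rw [pow_succ]; gcongr; exact mul_le_of_le_one_right (pow_nonneg hξ0 _) hξ1
            _ = c * ξ ^ N := mul_comm _ _
      rw [prod_range_succ, prod_range_succ]
      calc _ ≤ (exp (-2 * ∑ j ∈ range N, ξ ^ (j + 1)) * ∏ k ∈ range N, (x + c * ξ ^ k)) *
            (exp (-2 * ξ ^ (N + 1)) * (x + c * ξ ^ N)) :=
            mul_le_mul (prod_abs_sub_mul_pow_le hξ0 hξ1 N hc hN hhi) last (abs_nonneg _)
              (by positivity)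
        _ = _ := by ring
    · have first : |x - c| ≤ exp (-2 * ξ ^ (N + 1)) * (x + c) := by
        refine abs_sub_le_exp_mul_add hs0 hx hc ?_ ?_
        · rw [mul_comm]; exact hlo
        · exact (mul_le_of_le_one_left hx hs1).trans hhi
      have rest : ∏ k ∈ range N, |x - c * ξ ^ (k + 1)| ≤
          exp (-2 * ∑ j ∈ range N, ξ ^ (j + 1)) * ∏ k ∈ range N, (x + c * ξ ^ (k + 1)) := by
        have shift (k : ℕ) : c * ξ ^ (k + 1) = c * ξ * ξ ^ k := by ring
        simp only [shift]
        rcases N.eq_zero_or_pos with rfl | hpos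
        · simp
        refine prod_abs_sub_mul_pow_le hξ0 hξ1 N (by positivity) ?_ ?_
        · rwa [mul_assoc, ← pow_succ']
        · calc x ≤ c * ξ ^ N := hN.le
            _ ≤ c * ξ := by gcongr; exact pow_le_of_le_one hξ0 hξ1 hpos.ne'
      rw [prod_range_succ', prod_range_succ', pow_zero, mul_one]
      calc _ ≤ (exp (-2 * ∑ j ∈ range N, ξ ^ (j + 1)) * ∏ k ∈ range N, (x + c * ξ ^ (k + 1))) *
            (exp (-2 * ξ ^ (N + 1)) * (x + c)) :=
            mul_le_mul rest first (abs_nonneg _) (by positivity)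
        _ = _ := by ring

theorem Polynomial.IsMonicOfDegree.comp_neg_X {R : Type*} [CommRing R] [IsDomain R] {p : R[X]}
    {n : ℕ} (hp : p.IsMonicOfDegree n) (hn : Even n) : (p.comp (-X)).IsMonicOfDegree n := by
  have hdeg : (p.comp (-X)).natDegree = n := by simp [natDegree_comp, hp.natDegree_eq]
  refine (isMonicOfDegree_iff _ _).2 ⟨hdeg.le, ?_⟩
  rw [← hdeg, coeff_natDegree, leadingCoeff_comp (by simp), hp.leadingCoeff_eq, hp.natDegree_eq]
  simp [hn.neg_one_pow]

theorem Polynomial.IsMonicOfDegree.natDegree_X_mul_sub_comp_neg_X_le {R : Type*} [CommRing R]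
    [IsDomain R] {p : R[X]} {n : ℕ} (hp : p.IsMonicOfDegree n) (hn : Even n) :
    (X * (p - p.comp (-X))).natDegree ≤ n := by
  rcases eq_or_ne n 0 with rfl | hn0
  · simp [isMonicOfDegree_zero_iff.1 hp]
  have := hp.natDegree_sub_lt hn0 (hp.comp_neg_X hn)
  calc _ ≤ X.natDegree + (p - p.comp (-X)).natDegree := natDegree_mul_le
    _ ≤ n := by rw [natDegree_X]; omega

theorem Function.Even.apply_abs {α β : Type*} [AddGroup α] [LinearOrder α] {f : α → β}
    (hf : f.Even) (x : α) : f |x| = f x := by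
  rcases abs_choice x with h | h <;> simp [h, hf.eq]

noncomputable def newmanPoly (ξ : ℝ) (N : ℕ) : ℝ[X] := ∏ k ∈ range N, (X + C (ξ ^ k))

theorem isMonicOfDegree_newmanPoly (ξ : ℝ) (N : ℕ) : (newmanPoly ξ N).IsMonicOfDegree N := by
  induction N with
  | zero => simp [newmanPoly, isMonicOfDegree_zero_iff]
  | succ N ih => rw [newmanPoly, prod_range_succ]; exact ih.mul (isMonicOfDegree_X_add_one _)

theorem eval_newmanPoly (ξ x : ℝ) (N : ℕ) :
    (newmanPoly ξ N).eval x = ∏ k ∈ range N, (x + ξ ^ k) := by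
  simp [newmanPoly, eval_prod]

theorem eval_newmanPoly_pos {ξ x : ℝ} (hξ : 0 < ξ) (hx : 0 ≤ x) (N : ℕ) :
    0 < (newmanPoly ξ N).eval x := by
  rw [eval_newmanPoly]; exact prod_pos fun k _ => by positivity

theorem eval_neg_newmanPoly_cases {ξ ε y : ℝ} {N : ℕ} (hξ0 : 0 ≤ ξ) (hξ1 : ξ ≤ 1)
    (hξN : ξ ^ N ≤ ε) (hS : exp (-2 * ∑ j ∈ range N, ξ ^ (j + 1)) ≤ ε) (hy0 : 0 ≤ y)
    (hy1 : y ≤ 1) :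
    (0 ≤ (newmanPoly ξ N).eval (-y) ∧ (newmanPoly ξ N).eval (-y) ≤ (newmanPoly ξ N).eval y ∧
      y ≤ ε) ∨ |(newmanPoly ξ N).eval (-y)| ≤ ε * (newmanPoly ξ N).eval y := by
  simp only [eval_newmanPoly]
  rcases le_or_gt y (ξ ^ N) with hy | hy
  · have hnode (k : ℕ) (hk : k ∈ range N) : 0 ≤ -y + ξ ^ k := by
      have := pow_le_pow_of_le_one hξ0 hξ1 (mem_range.1 hk).le
      linarith
    exact .inl ⟨prod_nonneg hnode, prod_le_prod hnode fun k _ => by linarith, hy.trans hξN⟩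
  · refine .inr ?_
    have hprod := prod_abs_sub_mul_pow_le hξ0 hξ1 N zero_le_one (by simpa using hy.le) hy1
    simp only [one_mul] at hprod
    rw [abs_prod]
    calc ∏ k ∈ range N, |-y + ξ ^ k| = ∏ k ∈ range N, |y - ξ ^ k| :=
          prod_congr rfl fun k _ => by rw [neg_add_eq_sub, abs_sub_comm]
      _ ≤ _ := hprod
      _ ≤ ε * ∏ k ∈ range N, (y + ξ ^ k) := by gcongr

theorem abs_sub_mul_sub_div_add_le {y a b ε : ℝ} (hy0 : 0 ≤ y) (hy1 : y ≤ 1) (ha : 0 < a)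
    (hε : ε ≤ 1 / 3) (h : (0 ≤ b ∧ b ≤ a ∧ y ≤ ε) ∨ |b| ≤ ε * a) :
    0 < a + b ∧ |y - y * (a - b) / (a + b)| ≤ 3 * ε := by
  have hab : 0 < a + b := by
    rcases h with ⟨hb, -⟩ | hb
    · linarith
    · nlinarith [neg_abs_le b]
  have herr : y - y * (a - b) / (a + b) = 2 * y * b / (a + b) := by field_simp; ring
  refine ⟨hab, ?_⟩
  rw [herr, abs_div, abs_of_pos hab, div_le_iff₀ hab, abs_mul, abs_of_nonneg (by positivity)]
  rcases h with ⟨hb0, hba, hyε⟩ | hb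
  · rw [abs_of_nonneg hb0]; nlinarith
  · have hε0 : 0 ≤ ε := nonneg_of_mul_nonneg_left ((abs_nonneg b).trans hb) ha
    nlinarith [neg_abs_le b, abs_nonneg b]

def AbsApproxByRational (n : ℕ) (δ : ℝ) : Prop :=
  ∃ p q : ℝ[X], p.natDegree ≤ n ∧ q.natDegree ≤ n ∧ (∀ x ∈ Set.Icc (-1 : ℝ) 1, q.eval x ≠ 0) ∧
    ∀ x ∈ Set.Icc (-1 : ℝ) 1, |(|x| - p.eval x / q.eval x)| ≤ δ

theorem AbsApproxByRational.mono {m n : ℕ} {δ δ' : ℝ} (h : AbsApproxByRational m δ) (hmn : m ≤ n)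
    (hδ : δ ≤ δ') : AbsApproxByRational n δ' := by
  obtain ⟨p, q, hp, hq, hq0, hpq⟩ := h
  exact ⟨p, q, hp.trans hmn, hq.trans hmn, hq0, fun x hx => (hpq x hx).trans hδ⟩

theorem absApproxByRational_of_polynomial {n : ℕ} {δ : ℝ} (p : ℝ[X]) (hp : p.natDegree ≤ n)
    (h : ∀ x ∈ Set.Icc (-1 : ℝ) 1, |(|x| - p.eval x)| ≤ δ) : AbsApproxByRational n δ :=
  ⟨p, 1, hp, by simp, by simp, by simpa using h⟩

theorem absApproxByRational_newman {ξ ε : ℝ} {N : ℕ} (hN : Even N) (hξ0 : 0 < ξ) (hξ1 : ξ ≤ 1)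
    (hε : ε ≤ 1 / 3) (hξN : ξ ^ N ≤ ε) (hS : exp (-2 * ∑ j ∈ range N, ξ ^ (j + 1)) ≤ ε) :
    AbsApproxByRational N (3 * ε) := by
  set A := newmanPoly ξ N
  have hA := isMonicOfDegree_newmanPoly ξ N
  set p := X * (A - A.comp (-X))
  set q := A + A.comp (-X)
  have hp (x : ℝ) : p.eval x = x * (A.eval x - A.eval (-x)) := by simp [p]
  have hq (x : ℝ) : q.eval x = A.eval x + A.eval (-x) := by simp [q]
  have hpeven : Function.Even fun x => p.eval x := fun x => by simp only [hp, neg_neg]; ring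
  have hqeven : Function.Even fun x => q.eval x := fun x => by simp only [hq, neg_neg]; ring
  have key (x : ℝ) (hx : x ∈ Set.Icc (-1 : ℝ) 1) :
      0 < q.eval x ∧ |(|x| - p.eval x / q.eval x)| ≤ 3 * ε := by
    have hx0 := abs_nonneg x
    have hx1 : |x| ≤ 1 := abs_le.2 hx
    rw [← hpeven.apply_abs, ← hqeven.apply_abs, hp, hq]
    exact abs_sub_mul_sub_div_add_le hx0 hx1 (eval_newmanPoly_pos hξ0 hx0 N) hε
      (eval_neg_newmanPoly_cases hξ0.le hξ1 hξN hS hx0 hx1)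
  refine ⟨p, q, hA.natDegree_X_mul_sub_comp_neg_X_le hN,
    natDegree_add_le_of_degree_le hA.natDegree_eq.le (hA.comp_neg_X hN).natDegree_eq.le,
    fun x hx => (key x hx).1.ne', fun x hx => (key x hx).2⟩

theorem one_sub_mul_one_sub_pow_le_mul_sum {a : ℝ} (ha : 0 ≤ a) (N : ℕ) :
    (1 - a) * (1 - exp (-a) ^ N) ≤ a * ∑ j ∈ range N, exp (-a) ^ (j + 1) := by
  set ξ := exp (-a)
  have hξa : 1 - a ≤ ξ := by linarith [add_one_le_exp (-a)]
  have hξ1 : ξ ≤ 1 := exp_le_one_iff.2 (by linarith)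
  have hgeom : (1 - ξ) * ∑ j ∈ range N, ξ ^ (j + 1) = ξ * (1 - ξ ^ N) := by
    simp only [pow_succ', ← mul_sum]
    linear_combination -ξ * mul_geom_sum ξ N
  calc (1 - a) * (1 - ξ ^ N) ≤ ξ * (1 - ξ ^ N) := by
        gcongr; exact sub_nonneg.2 (pow_le_one₀ (exp_pos _).le hξ1)
    _ = (1 - ξ) * ∑ j ∈ range N, ξ ^ (j + 1) := hgeom.symm
    _ ≤ a * ∑ j ∈ range N, ξ ^ (j + 1) := by
        gcongr; linarith

theorem exp_neg_div_pow {s : ℝ} {N : ℕ} (hN : N ≠ 0) : exp (-(s / N)) ^ N = exp (-s) := by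
  rw [← exp_nat_mul]; field_simp

theorem exp_neg_sqrt_le {n : ℕ} (hn : 9 ≤ n) : exp (-√n) ≤ 2 / 17 := by
  have hs : 3 ≤ √(n : ℝ) :=
    (le_sqrt (by norm_num) (Nat.cast_nonneg n)).2 (by norm_num; exact_mod_cast hn)
  have := quadratic_le_exp_of_nonneg (by linarith : 0 ≤ √(n : ℝ))
  rw [exp_neg, inv_le_comm₀ (exp_pos _) (by norm_num)]
  nlinarith

theorem sqrt_le_two_mul_sum_exp_neg {n N : ℕ} (hN : 10 ≤ N) (hNn : N ≤ n) (hnN : n ≤ N + 1) :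
    √n ≤ 2 * ∑ j ∈ range N, exp (-(√n / N)) ^ (j + 1) := by
  set s := √(n : ℝ)
  set a := s / N
  have hN' : (10 : ℝ) ≤ N := by exact_mod_cast hN
  have hnN' : (n : ℝ) ≤ N + 1 := by exact_mod_cast hnN
  have hss : s * s = n := mul_self_sqrt (Nat.cast_nonneg n)
  have hs0 : 0 < s := sqrt_pos.2 (by norm_cast; omega)
  have haN : a * N = s := div_mul_cancel₀ s (by positivity)
  have ha0 : 0 < a := by positivity
  have ha3 : a ≤ 1 / 3 := by
    rw [div_le_iff₀ (by positivity)]; nlinarith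
  have has : a * s ≤ 11 / 10 := by
    have : a * s * N ≤ 11 / 10 * N := by rw [mul_right_comm, haN]; nlinarith
    exact le_of_mul_le_mul_right this (by positivity)
  have hgeom := one_sub_mul_one_sub_pow_le_mul_sum ha0.le N
  rw [exp_neg_div_pow (by omega)] at hgeom
  have ht := exp_neg_sqrt_le (show 9 ≤ n by omega)
  refine le_of_mul_le_mul_left ?_ ha0
  nlinarith

theorem absApproxByRational_half (n : ℕ) : AbsApproxByRational n (1 / 2) :=
  absApproxByRational_of_polynomial (C (1 / 2)) (by simp) fun x hx => by
    have := abs_le.2 hx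
    rw [eval_C, abs_le]; constructor <;> linarith [abs_nonneg x]

theorem absApproxByRational_sq_add {n : ℕ} (hn : 2 ≤ n) : AbsApproxByRational n (1 / 8) := by
  refine absApproxByRational_of_polynomial (X ^ 2 + C (1 / 8)) ?_ fun x hx => ?_
  · exact (natDegree_add_le_of_degree_le (natDegree_X_pow_le 2) (by simp)).trans hn
  · have := abs_le.2 hx
    rw [eval_add, eval_pow, eval_X, eval_C, ← sq_abs, abs_le]
    constructor <;> nlinarith [abs_nonneg x, sq_nonneg (|x| - 1 / 2)]

theorem absApproxByRational_of_lt_ten {n : ℕ} (hn : n < 10) :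
    AbsApproxByRational n (3 * exp (-√n)) := by
  rcases le_or_gt n 1 with h1 | h2
  · refine (absApproxByRational_half n).mono le_rfl ?_
    have hs : √n ≤ 1 := sqrt_le_one.2 (by exact_mod_cast h1)
    calc (1 : ℝ) / 2 ≤ 3 * exp (-1) := by
          rw [exp_neg, ← div_eq_mul_inv, le_div_iff₀ (exp_pos 1)]; linarith [exp_one_lt_three]
      _ ≤ 3 * exp (-√n) := by gcongr
  · refine (absApproxByRational_sq_add h2).mono le_rfl ?_
    have hs : √n ≤ 3 :=
      (sqrt_le_left (by norm_num)).2 (by norm_num; exact_mod_cast (show n ≤ 9 by omega))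
    have he3 : exp 3 ≤ 24 := by
      have h := pow_le_pow_left₀ (exp_pos 1).le exp_one_lt_d9.le 3
      rw [← exp_nat_mul] at h
      norm_num at h
      linarith
    calc (1 : ℝ) / 8 ≤ 3 * exp (-3) := by
          rw [exp_neg, ← div_eq_mul_inv, le_div_iff₀ (exp_pos 3)]; linarith
      _ ≤ 3 * exp (-√n) := by gcongr

theorem absApproxByRational_of_ten_le {n : ℕ} (hn : 10 ≤ n) :
    AbsApproxByRational n (3 * exp (-√n)) := by
  have hN : (2 * (n / 2) : ℕ) ≠ 0 := by omega
  have hsum := sqrt_le_two_mul_sum_exp_neg (n := n) (N := 2 * (n / 2)) (by omega) (by omega)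
    (by omega)
  refine (absApproxByRational_newman (even_two_mul _) (exp_pos _) (exp_le_one_iff.2 ?_) ?_
    (exp_neg_div_pow hN).le (exp_le_exp.2 (by linarith))).mono (by omega) le_rfl
  · exact neg_nonpos.2 (by positivity)
  · linarith [exp_neg_sqrt_le (show 9 ≤ n by omega)]

theorem newman_rational_approximation_of_abs_general (n : ℕ) :
    ∃ p q : Polynomial ℝ,
      p.natDegree ≤ n ∧ q.natDegree ≤ n ∧
      (∀ x ∈ Set.Icc (-1 : ℝ) 1, q.eval x ≠ 0) ∧
      ∀ x ∈ Set.Icc (-1 : ℝ) 1,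
        |(|x| - p.eval x / q.eval x)| ≤ 3 * Real.exp (-Real.sqrt n) := by
  rcases lt_or_ge n 10 with h | h
  exacts [absApproxByRational_of_lt_ten h, absApproxByRational_of_ten_le h]

/-- **Newman's theorem (1964).** For every positive integer `n` there is a rational
function `rₙ = pₙ/qₙ`, with `pₙ, qₙ` real polynomials of degree at most `n` and `qₙ`
nonvanishing on `[-1,1]`, such that `| |x| - rₙ(x) | ≤ 3 · exp(-√n)` for all
`x ∈ [-1,1]`; in particular rational approximations to `|x|` converge
root-exponentially. -/
theorem newman_rational_approximation_of_abs (n : ℕ) (hn : 0 < n) :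
    ∃ p q : Polynomial ℝ,
      p.natDegree ≤ n ∧ q.natDegree ≤ n ∧
      (∀ x ∈ Set.Icc (-1 : ℝ) 1, q.eval x ≠ 0) ∧
      ∀ x ∈ Set.Icc (-1 : ℝ) 1,
        |(|x| - p.eval x / q.eval x)| ≤ 3 * Real.exp (-Real.sqrt n) :=
  newman_rational_approximation_of_abs_general n
end

section
/- There exists a constant c > 0 such that for every positive integer n and every real polynomial p of degree at most n, sup_{x ∈ [-1,1]} | |x| - p(x) | ≥ c/n. In other words, polynomial approximations to |x| on [-1,1] converge at best at the rate O(n^{-1}). -/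
/-!
Let `F(θ) = ∑_{l ≤ n} (-1)^l e^{2ilθ} = C(θ) + i S(θ)` and pair `|x| - p(x)`, at `x = cos θ`, with
the kernel `K(θ) = (-1)^n Re(e^{2inθ} F(θ)²) = ∑_{l, l' ≤ n} (-1)^j cos 2jθ`, `j = n + l + l'`.
Every frequency of `K` exceeds `deg p`, so `K` is orthogonal to `p(cos θ)` on `[0, π]`, while the
cosine coefficients `∫ |cos θ| cos 2jθ = (-1)^(j+1) 2 / (4j² - 1)` carry exactly the signs that make
`∫ |cos θ| K(θ) ≤ -(n+1)² / (18n²)`. As `|K| ≤ |F|²` and `∫_0^π |F|² = (n+1)π`, the sup norm of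
`|x| - p(x)` on `[-1, 1]` is at least `(n+1) / (18πn²) ≥ 1 / (18πn)`.
-/

open Real intervalIntegral Finset Polynomial

theorem integral_cos_mul {c : ℝ} (hc : c ≠ 0) (a b : ℝ) :
    ∫ x in a..b, cos (c * x) = (sin (c * b) - sin (c * a)) / c := by
  rw [integral_comp_mul_left cos hc, integral_cos, smul_eq_mul, inv_mul_eq_div]

theorem integral_cos_int_mul_eq_zero {k : ℤ} (hk : k ≠ 0) : ∫ θ in 0..π, cos (k * θ) = 0 := by
  simp [integral_cos_mul (Int.cast_ne_zero.2 hk), sin_int_mul_pi]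

theorem integral_cos_pow_mul_cos_eq_zero {l : ℕ} {k : ℤ} (h : (l : ℤ) < k) :
    ∫ θ in 0..π, cos θ ^ l * cos (k * θ) = 0 := by
  induction l generalizing k with
  | zero => simpa using integral_cos_int_mul_eq_zero (by omega : k ≠ 0)
  | succ l ih =>
    have product_to_sum : ∀ θ, cos θ ^ (l + 1) * cos (k * θ) =
        (cos θ ^ l * cos ((k + 1 : ℤ) * θ) + cos θ ^ l * cos ((k - 1 : ℤ) * θ)) / 2 := by
      intro θ
      push_cast
      rw [add_mul, sub_mul, one_mul, cos_add, cos_sub]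
      ring
    simp_rw [product_to_sum]
    rw [integral_div, integral_add ((by fun_prop : Continuous _).intervalIntegrable _ _)
      ((by fun_prop : Continuous _).intervalIntegrable _ _), ih (by omega), ih (by omega),
      add_zero, zero_div]

theorem integral_eval_cos_mul_cos_eq_zero (p : ℝ[X]) {k : ℤ} (h : (p.natDegree : ℤ) < k) :
    ∫ θ in 0..π, p.eval (cos θ) * cos (k * θ) = 0 := by
  simp_rw [eval_eq_sum_range, sum_mul, mul_assoc]
  rw [integral_finsetSum fun i _ => (by fun_prop : Continuous _).intervalIntegrable _ _]
  refine sum_eq_zero fun i hi => ?_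
  rw [integral_const_mul, integral_cos_pow_mul_cos_eq_zero (by rw [mem_range] at hi; omega),
    mul_zero]

theorem hasDerivAt_sin_mul_div {c : ℝ} (hc : c ≠ 0) (x : ℝ) :
    HasDerivAt (fun x => sin (c * x) / c) (cos (c * x)) x := by
  simpa [hc] using ((hasDerivAt_id x).const_mul c).sin.div_const c

theorem integral_abs_cos_mul_cos_two_mul (k : ℕ) :
    ∫ θ in 0..π, |cos θ| * cos (2 * k * θ) = (-1) ^ (k + 1) * 2 / (4 * k ^ 2 - 1) := by
  have hk₁ : (2 * k + 1 : ℝ) ≠ 0 := by positivity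
  have hk₂ : (2 * k - 1 : ℝ) ≠ 0 := by
    rcases k with _ | k
    · norm_num
    · push_cast; linarith
  set G : ℝ → ℝ := fun θ =>
    sin ((2 * k + 1) * θ) / (2 * k + 1) + sin ((2 * k - 1) * θ) / (2 * k - 1)
  have hG : ∀ θ, HasDerivAt G (2 * (cos θ * cos (2 * k * θ))) θ := fun θ =>
    ((hasDerivAt_sin_mul_div hk₁ θ).add (hasDerivAt_sin_mul_div hk₂ θ)).congr_deriv (by
      rw [add_mul, sub_mul, one_mul, cos_add, cos_sub]; ring)
  have hcont : Continuous fun θ => 2 * (cos θ * cos (2 * k * θ)) := by fun_prop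
  have left : ∫ θ in 0..π / 2, |cos θ| * cos (2 * k * θ) = (G (π / 2) - G 0) / 2 := by
    rw [← integral_eq_sub_of_hasDerivAt (fun θ _ => hG θ) (hcont.intervalIntegrable _ _),
      ← integral_div]
    refine integral_congr fun θ hθ => ?_
    rw [Set.uIcc_of_le (by positivity)] at hθ
    rw [abs_of_nonneg (cos_nonneg_of_mem_Icc ⟨by linarith [hθ.1, pi_pos], hθ.2⟩)]
    ring
  have right : ∫ θ in π / 2..π, |cos θ| * cos (2 * k * θ) = -(G π - G (π / 2)) / 2 := by
    rw [← integral_eq_sub_of_hasDerivAt (fun θ _ => hG θ) (hcont.intervalIntegrable _ _),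
      ← integral_neg, ← integral_div]
    refine integral_congr fun θ hθ => ?_
    rw [Set.uIcc_of_le (by linarith [pi_pos])] at hθ
    rw [abs_of_nonpos (cos_nonpos_of_pi_div_two_le_of_le hθ.1 (by linarith [hθ.2, pi_pos]))]
    ring
  have hint : Continuous fun θ => |cos θ| * cos (2 * k * θ) := by fun_prop
  rw [← integral_add_adjacent_intervals (hint.intervalIntegrable 0 (π / 2))
    (hint.intervalIntegrable _ π), left, right]
  have hG0 : G 0 = 0 := by simp [G]
  have hGπ : G π = 0 := by
    simp only [G]
    rw [show (2 * k + 1 : ℝ) * π = ((2 * k + 1 : ℕ) : ℝ) * π by push_cast; ring,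
      show (2 * k - 1 : ℝ) * π = ((2 * k - 1 : ℤ) : ℝ) * π by push_cast; ring,
      sin_nat_mul_pi, sin_int_mul_pi, zero_div, zero_div, add_zero]
  have hGπ2 : G (π / 2) = (-1) ^ k * (1 / (2 * k + 1) - 1 / (2 * k - 1)) := by
    simp only [G]
    rw [show (2 * k + 1 : ℝ) * (π / 2) = k * π + π / 2 by ring,
      show (2 * k - 1 : ℝ) * (π / 2) = k * π - π / 2 by ring,
      sin_add_pi_div_two, sin_sub_pi_div_two, cos_nat_mul_pi]
    ring
  rw [hG0, hGπ, hGπ2, show (4 * k ^ 2 - 1 : ℝ) = (2 * k + 1) * (2 * k - 1) by ring]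
  field_simp
  ring

theorem sum_sum_mul_cos_add_add {ι κ : Type*} (s : Finset ι) (t : Finset κ) (a x : ι → ℝ)
    (b y : κ → ℝ) (φ : ℝ) :
    ∑ i ∈ s, ∑ j ∈ t, a i * b j * cos (φ + x i + y j) =
      cos φ * ((∑ i ∈ s, a i * cos (x i)) * (∑ j ∈ t, b j * cos (y j)) -
          (∑ i ∈ s, a i * sin (x i)) * (∑ j ∈ t, b j * sin (y j))) -
        sin φ * ((∑ i ∈ s, a i * sin (x i)) * (∑ j ∈ t, b j * cos (y j)) +
          (∑ i ∈ s, a i * cos (x i)) * (∑ j ∈ t, b j * sin (y j))) := by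
  simp only [Finset.sum_mul_sum]
  simp only [mul_sum, ← sum_sub_distrib, ← sum_add_distrib]
  refine sum_congr rfl fun i _ => sum_congr rfl fun j _ => ?_
  rw [add_assoc, cos_add, cos_add, sin_add]
  ring

theorem abs_cos_mul_sub_sin_mul_le (φ u v : ℝ) :
    |cos φ * (u ^ 2 - v ^ 2) - sin φ * (2 * u * v)| ≤ u ^ 2 + v ^ 2 := by
  refine abs_le_of_sq_le_sq ?_ (by positivity)
  nlinarith [sin_sq_add_cos_sq φ, sq_nonneg (sin φ * (u ^ 2 - v ^ 2) + cos φ * (2 * u * v))]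

theorem integral_sum_sum {ι κ : Type*} (s : Finset ι) (t : Finset κ) {f : ι → κ → ℝ → ℝ}
    (hf : ∀ i j, Continuous (f i j)) (a b : ℝ) :
    ∫ x in a..b, ∑ i ∈ s, ∑ j ∈ t, f i j x = ∑ i ∈ s, ∑ j ∈ t, ∫ x in a..b, f i j x := by
  rw [integral_finsetSum fun i _ =>
    (continuous_finsetSum t fun j _ => hf i j).intervalIntegrable a b]
  exact sum_congr rfl fun i _ => integral_finsetSum fun j _ => (hf i j).intervalIntegrable a b

noncomputable def alternatingCosSum (n : ℕ) (θ : ℝ) : ℝ :=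
  ∑ l ∈ range (n + 1), (-1) ^ l * cos (2 * l * θ)

noncomputable def alternatingSinSum (n : ℕ) (θ : ℝ) : ℝ :=
  ∑ l ∈ range (n + 1), (-1) ^ l * sin (2 * l * θ)

theorem integral_alternatingCosSum_sq_add_alternatingSinSum_sq (n : ℕ) :
    ∫ θ in 0..π, alternatingCosSum n θ ^ 2 + alternatingSinSum n θ ^ 2 = (n + 1) * π := by
  have expand : ∀ θ, alternatingCosSum n θ ^ 2 + alternatingSinSum n θ ^ 2 =
      ∑ l ∈ range (n + 1), ∑ l' ∈ range (n + 1),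
        (-1) ^ l * (-1) ^ l' * cos (0 + 2 * l * θ + -(2 * l' * θ)) := by
    intro θ
    rw [sum_sum_mul_cos_add_add]
    simp [alternatingCosSum, alternatingSinSum, sq]
  have diagonal : ∀ l l' : ℕ, ∫ θ in 0..π, cos (0 + 2 * l * θ + -(2 * l' * θ)) =
      if l = l' then π else 0 := by
    intro l l'
    split_ifs with h
    · simp [h]
    · convert integral_cos_int_mul_eq_zero (k := 2 * l - 2 * l') (by omega) using 3
      push_cast
      congr 1
      ring
  simp_rw [expand]
  rw [integral_sum_sum _ _ fun l l' => by fun_prop]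
  simp_rw [integral_const_mul, diagonal]
  simp only [mul_ite, mul_zero, sum_ite_eq, ← mul_pow]
  rw [sum_ite_mem, inter_self]
  simp

noncomputable def modulatedFejerKernel (n : ℕ) (θ : ℝ) : ℝ :=
  ∑ l ∈ range (n + 1), ∑ l' ∈ range (n + 1),
    (-1) ^ (n + l + l') * cos (2 * (n + l + l' : ℕ) * θ)

@[fun_prop]
theorem continuous_modulatedFejerKernel (n : ℕ) : Continuous (modulatedFejerKernel n) := by
  unfold modulatedFejerKernel
  fun_prop

theorem modulatedFejerKernel_eq (n : ℕ) (θ : ℝ) :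
    modulatedFejerKernel n θ = (-1) ^ n *
      (cos (2 * n * θ) * (alternatingCosSum n θ ^ 2 - alternatingSinSum n θ ^ 2) -
        sin (2 * n * θ) * (2 * alternatingCosSum n θ * alternatingSinSum n θ)) := by
  have hterm : ∀ l l' : ℕ, (-1 : ℝ) ^ (n + l + l') * cos (2 * (n + l + l' : ℕ) * θ) =
      (-1) ^ n * ((-1) ^ l * (-1) ^ l' * cos (2 * n * θ + 2 * l * θ + 2 * l' * θ)) := by
    intro l l'
    push_cast
    rw [pow_add, pow_add]
    ring_nf
  simp only [modulatedFejerKernel, hterm, ← mul_sum, sum_sum_mul_cos_add_add]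
  simp only [alternatingCosSum, alternatingSinSum]
  ring

theorem abs_modulatedFejerKernel_le (n : ℕ) (θ : ℝ) :
    |modulatedFejerKernel n θ| ≤ alternatingCosSum n θ ^ 2 + alternatingSinSum n θ ^ 2 := by
  rw [modulatedFejerKernel_eq, abs_mul, abs_pow, abs_neg, abs_one, one_pow, one_mul]
  exact abs_cos_mul_sub_sin_mul_le _ _ _

theorem integral_abs_modulatedFejerKernel_le (n : ℕ) :
    ∫ θ in 0..π, |modulatedFejerKernel n θ| ≤ (n + 1) * π := by
  rw [← integral_alternatingCosSum_sq_add_alternatingSinSum_sq]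
  refine integral_mono_on pi_pos.le ((by fun_prop : Continuous _).intervalIntegrable _ _)
    ((by unfold alternatingCosSum alternatingSinSum; fun_prop : Continuous _).intervalIntegrable
      _ _)
    fun θ _ => abs_modulatedFejerKernel_le n θ

theorem integral_comp_cos_mul_modulatedFejerKernel {g : ℝ → ℝ} (hg : Continuous g) (n : ℕ) :
    ∫ θ in 0..π, g (cos θ) * modulatedFejerKernel n θ =
      ∑ l ∈ range (n + 1), ∑ l' ∈ range (n + 1),
        (-1) ^ (n + l + l') * ∫ θ in 0..π, g (cos θ) * cos (2 * (n + l + l' : ℕ) * θ) := by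
  simp_rw [modulatedFejerKernel, mul_sum, mul_left_comm (g _)]
  rw [integral_sum_sum _ _ fun l l' => by fun_prop]
  simp_rw [integral_const_mul]

theorem integral_eval_cos_mul_modulatedFejerKernel {n : ℕ} (hn : 0 < n) {p : ℝ[X]}
    (hp : p.natDegree ≤ n) : ∫ θ in 0..π, p.eval (cos θ) * modulatedFejerKernel n θ = 0 := by
  rw [integral_comp_cos_mul_modulatedFejerKernel p.continuous]
  refine sum_eq_zero fun l _ => sum_eq_zero fun l' _ => ?_
  have h := integral_eval_cos_mul_cos_eq_zero p (k := 2 * (n + l + l' : ℕ)) (by omega)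
  push_cast at h ⊢
  rw [h, mul_zero]

theorem integral_abs_cos_mul_modulatedFejerKernel_le {n : ℕ} (hn : 0 < n) :
    ∫ θ in 0..π, |cos θ| * modulatedFejerKernel n θ ≤ -((n + 1) ^ 2 / (18 * n ^ 2)) := by
  rw [integral_comp_cos_mul_modulatedFejerKernel continuous_abs]
  have hterm : ∀ l ∈ range (n + 1), ∀ l' ∈ range (n + 1),
      (-1) ^ (n + l + l') * ∫ θ in 0..π, |cos θ| * cos (2 * (n + l + l' : ℕ) * θ) ≤
        -(1 / (18 * n ^ 2) : ℝ) := by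
    intro l hl l' hl'
    simp only [mem_range] at hl hl'
    have hj : (n : ℝ) ≤ (n + l + l' : ℕ) ∧ ((n + l + l' : ℕ) : ℝ) ≤ 3 * n := by
      constructor <;> norm_cast <;> omega
    have hn' : (1 : ℝ) ≤ n := by exact_mod_cast hn
    generalize (n + l + l' : ℕ) = j at hj ⊢
    have hsign : (-1 : ℝ) ^ j * (-1) ^ (j + 1) = -1 := by
      rw [← pow_add]
      exact Odd.neg_one_pow ⟨j, by ring⟩
    rw [integral_abs_cos_mul_cos_two_mul, mul_div_assoc, ← mul_assoc, hsign, neg_one_mul,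
      neg_le_neg_iff, div_le_div_iff₀ (by positivity) (by nlinarith)]
    nlinarith
  calc _ ≤ ∑ l ∈ range (n + 1), ∑ l' ∈ range (n + 1), -(1 / (18 * n ^ 2) : ℝ) :=
        sum_le_sum fun l hl => sum_le_sum fun l' hl' => hterm l hl l' hl'
    _ = -((n + 1) ^ 2 / (18 * n ^ 2)) := by
        simp only [sum_const, card_range, nsmul_eq_mul]
        push_cast
        ring

theorem abs_integral_comp_cos_mul_le {h K : ℝ → ℝ} (hh : Continuous h) (hK : Continuous K) :
    |∫ θ in 0..π, h (cos θ) * K θ| ≤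
      sSup ((fun x => |h x|) '' Set.Icc (-1) 1) * ∫ θ in 0..π, |K θ| := by
  have hbdd : BddAbove ((fun x => |h x|) '' Set.Icc (-1) 1) :=
    isCompact_Icc.bddAbove_image hh.abs.continuousOn
  rw [← integral_const_mul]
  refine (abs_integral_le_integral_abs pi_pos.le).trans <| integral_mono_on pi_pos.le
    ((by fun_prop : Continuous _).intervalIntegrable _ _)
    ((by fun_prop : Continuous _).intervalIntegrable _ _) fun θ _ => ?_
  rw [abs_mul]
  exact mul_le_mul_of_nonneg_right
    (le_csSup hbdd ⟨cos θ, ⟨neg_one_le_cos θ, cos_le_one θ⟩, rfl⟩) (abs_nonneg _)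

/-- **Bernstein's lower bound.** There is a constant `c > 0` such that for every
positive integer `n` and every real polynomial `p` of degree at most `n`, the
supremum over `[-1,1]` of `| |x| - p(x) |` is at least `c / n`: polynomial
approximations to `|x|` on `[-1,1]` converge at best at the rate `O(n⁻¹)`. -/
theorem polynomial_approximation_of_abs_lower_bound :
    ∃ c : ℝ, 0 < c ∧
      ∀ n : ℕ, 0 < n → ∀ p : Polynomial ℝ, p.natDegree ≤ n →
        c / n ≤ sSup ((fun x : ℝ => |(|x| - p.eval x)|) '' Set.Icc (-1 : ℝ) 1) := by
  refine ⟨1 / (18 * π), by positivity, fun n hn p hp => ?_⟩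
  set E := sSup ((fun x : ℝ => |(|x| - p.eval x)|) '' Set.Icc (-1 : ℝ) 1)
  have hE : 0 ≤ E := Real.sSup_nonneg fun _ ⟨_, _, hx⟩ => hx ▸ abs_nonneg _
  have hreduce : ∫ θ in 0..π, (|cos θ| - p.eval (cos θ)) * modulatedFejerKernel n θ =
      ∫ θ in 0..π, |cos θ| * modulatedFejerKernel n θ := by
    simp_rw [sub_mul]
    rw [integral_sub ((by fun_prop : Continuous _).intervalIntegrable _ _)
      ((by fun_prop : Continuous _).intervalIntegrable _ _),
      integral_eval_cos_mul_modulatedFejerKernel hn hp, sub_zero]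
  have hupper := abs_integral_comp_cos_mul_le (h := fun x => |x| - p.eval x) (by fun_prop)
    (continuous_modulatedFejerKernel n)
  rw [hreduce] at hupper
  have hlower := integral_abs_cos_mul_modulatedFejerKernel_le hn
  have hL1 := integral_abs_modulatedFejerKernel_le n
  have hkey : (n + 1) ^ 2 / (18 * n ^ 2) ≤ E * ((n + 1) * π) := by
    linarith [neg_abs_le (∫ θ in 0..π, |cos θ| * modulatedFejerKernel n θ),
      mul_le_mul_of_nonneg_left hL1 hE]
  have hn' : (0 : ℝ) < n := by exact_mod_cast hn
  calc 1 / (18 * π) / n ≤ (n + 1) ^ 2 / (18 * n ^ 2) / ((n + 1) * π) := by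
        field_simp
        linarith
    _ ≤ E := div_le_of_le_mul₀ (by positivity) hE hkey
end
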